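/- arXiv:2401.14994 — 6 statements merged into one kernel-verified Lean document; each statement's English description precedes it below -/
import Mathlib

section
/- Let μ ∈ (0,1) and define f : ℝ → ℝ by f(r) = √(r²/μ² − 1) − arccos(μ/r). Then for every r with μ < r ≤ 1, f is differentiable at r with f'(r) = √(1/μ² − 1/r²); consequently, the classical Value function V(r,θ) = θ − √(1/μ² − 1) + arccos μ + √(r²/μ² − 1) − arccos(μ/r) satisfies ∂V/∂θ = 1, ∂V/∂r = √(1/μ² − 1/r²), and the Isaacs identity μ²·((∂V/∂r)² + 1/r²) = 1 at every such r. -/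
open Real

theorem mul_sq_sqrt_one_div_sub_add_one_div {μ r : ℝ} (hμ : μ ≠ 0)
    (h : 1 / r ^ 2 ≤ 1 / μ ^ 2) :
    μ ^ 2 * (√(1 / μ ^ 2 - 1 / r ^ 2) ^ 2 + 1 / r ^ 2) = 1 := by
  rw [sq_sqrt (sub_nonneg.2 h)]
  field_simp
  ring

/-- With `t = √(1/μ² − 1/r²)` one has `√(r²/μ² − 1) = r t` and `√(1 − (μ/r)²) = μ t`, so the
two terms of the derivative are `1/(μ² t)` and `1/(r² t)`, whose difference is `t² / t = t`. -/
theorem hasDerivAt_sqrt_sq_div_sq_sub_one_sub_arccos_div {μ r : ℝ} (hμ : 0 < μ) (hμr : μ < r) :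
    HasDerivAt (fun x => √(x ^ 2 / μ ^ 2 - 1) - arccos (μ / x))
      (√(1 / μ ^ 2 - 1 / r ^ 2)) r := by
  have hr : 0 < r := hμ.trans hμr
  have hlt : 1 / r ^ 2 < 1 / μ ^ 2 :=
    one_div_lt_one_div_of_lt (by positivity) (pow_lt_pow_left₀ hμr hμ.le two_ne_zero)
  set t := √(1 / μ ^ 2 - 1 / r ^ 2)
  have ht : 0 < t := sqrt_pos.2 (sub_pos.2 hlt)
  have ht_sq : r ^ 2 * μ ^ 2 * t ^ 2 = r ^ 2 - μ ^ 2 := by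
    rw [sq_sqrt (sub_pos.2 hlt).le]
    field_simp
  have hsqrt_eq : √(r ^ 2 / μ ^ 2 - 1) = r * t := by
    rw [show r ^ 2 / μ ^ 2 - 1 = r ^ 2 * (1 / μ ^ 2 - 1 / r ^ 2) by field_simp,
      sqrt_mul (sq_nonneg r), sqrt_sq hr.le]
  have harccos_eq : √(1 - (μ / r) ^ 2) = μ * t := by
    rw [show 1 - (μ / r) ^ 2 = μ ^ 2 * (1 / μ ^ 2 - 1 / r ^ 2) by field_simp,
      sqrt_mul (sq_nonneg μ), sqrt_sq hμ.le]
  have hsqrt_pos : 0 < r ^ 2 / μ ^ 2 - 1 := sqrt_pos.1 (by rw [hsqrt_eq]; positivity)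
  have hsqrt : HasDerivAt (fun x => √(x ^ 2 / μ ^ 2 - 1)) (2 * r / μ ^ 2 / (2 * (r * t))) r := by
    rw [← hsqrt_eq]
    refine HasDerivAt.sqrt ?_ hsqrt_pos.ne'
    simpa using ((hasDerivAt_pow 2 r).div_const (μ ^ 2)).sub_const 1
  have hdiv : HasDerivAt (fun x => μ / x) (-μ / r ^ 2) r := by
    simpa [div_eq_mul_inv, neg_div] using (hasDerivAt_inv hr.ne').const_mul μ
  have hμr' : μ / r < 1 := (div_lt_one hr).2 hμr
  have harccos : HasDerivAt (fun x => arccos (μ / x)) (-(1 / (μ * t)) * (-μ / r ^ 2)) r := by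
    rw [← harccos_eq]
    exact (hasDerivAt_arccos (by linarith [div_pos hμ hr]) hμr'.ne).comp r hdiv
  refine (hsqrt.sub harccos).congr_deriv ?_
  field_simp
  exact ht_sq.symm

/-- For `μ ∈ (0,1)` and `f r = √(r²/μ² − 1) − arccos(μ/r)`, at every
`r` with `μ < r ≤ 1` the function `f` has derivative `√(1/μ² − 1/r²)`; consequently the
classical Value function `V(r,θ) = θ − √(1/μ² − 1) + arccos μ + √(r²/μ² − 1) − arccos(μ/r)`
satisfies `∂V/∂θ = 1`, `∂V/∂r = √(1/μ² − 1/r²)` and the Isaacs identity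
`μ²·((∂V/∂r)² + 1/r²) = 1` at every such `r`. -/
theorem stmt_0 (μ : ℝ) (hμ : μ ∈ Set.Ioo (0 : ℝ) 1)
    (f : ℝ → ℝ)
    (hf : ∀ r : ℝ, f r = Real.sqrt (r ^ 2 / μ ^ 2 - 1) - Real.arccos (μ / r))
    (V : ℝ → ℝ → ℝ)
    (hV : ∀ r θ : ℝ, V r θ =
      θ - Real.sqrt (1 / μ ^ 2 - 1) + Real.arccos μ
        + Real.sqrt (r ^ 2 / μ ^ 2 - 1) - Real.arccos (μ / r)) :
    ∀ r : ℝ, μ < r → r ≤ 1 →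
      HasDerivAt f (Real.sqrt (1 / μ ^ 2 - 1 / r ^ 2)) r ∧
      (∀ θ : ℝ, HasDerivAt (fun θ' => V r θ') 1 θ) ∧
      (∀ θ : ℝ, HasDerivAt (fun r' => V r' θ) (Real.sqrt (1 / μ ^ 2 - 1 / r ^ 2)) r) ∧
      μ ^ 2 * ((Real.sqrt (1 / μ ^ 2 - 1 / r ^ 2)) ^ 2 + 1 / r ^ 2) = 1 := by
  intro r hμr _
  have hf_deriv : HasDerivAt f (√(1 / μ ^ 2 - 1 / r ^ 2)) r := by
    rw [funext hf]
    exact hasDerivAt_sqrt_sq_div_sq_sub_one_sub_arccos_div hμ.1 hμr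
  refine ⟨hf_deriv, fun θ => ?_, fun θ => ?_, mul_sq_sqrt_one_div_sub_add_one_div hμ.1.ne' ?_⟩
  · simp only [hV]
    exact ((((hasDerivAt_id' θ).sub_const _).add_const _).add_const _).sub_const _
  · have hV_r : (fun r' => V r' θ) = fun r' => (θ - √(1 / μ ^ 2 - 1) + arccos μ) + f r' := by
      funext r'
      rw [hV, hf]
      ring
    rw [hV_r]
    exact hf_deriv.const_add _
  · exact one_div_le_one_div_of_le (pow_pos hμ.1 2) (pow_le_pow_left₀ hμ.1.le hμr.le 2)
end

section
/- Let μ ∈ (0,1) and let I ⊆ ℝ be an interval. Suppose r : I → ℝ and θ : I → ℝ are differentiable, with μ < r(t) ≤ 1, r'(t) = μ√(1 − μ²/r(t)²), and θ'(t) = μ²/r(t)² − 1 for all t ∈ I. Then the function t ↦ V(r(t), θ(t)) is constant on I, where V(r,θ) = θ − √(1/μ² − 1) + arccos μ + √(r²/μ² − 1) − arccos(μ/r). -/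
/-!
Up to a constant, `V(r, θ) = θ + g(r)` with `g = radialValue μ`, and `g'(x) = √(x² − μ²)/(μx)`.
Along the flow `ṙ = μ√(r² − μ²)/r`, so `d/dt g(r) = 1 − μ²/r²`, which exactly cancels
`θ̇ = μ²/r² − 1`; a function with zero derivative on an interval is constant.
-/

open Real

noncomputable def radialValue (μ x : ℝ) : ℝ :=
  √(x ^ 2 / μ ^ 2 - 1) - arccos (μ / x)

lemma sqrt_sq_div_sq_sub_one {μ x : ℝ} (hμ : 0 < μ) :
    √(x ^ 2 / μ ^ 2 - 1) = √(x ^ 2 - μ ^ 2) / μ := by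
  rw [show x ^ 2 / μ ^ 2 - 1 = (x ^ 2 - μ ^ 2) / μ ^ 2 by field_simp,
    sqrt_div' _ (sq_nonneg μ), sqrt_sq hμ.le]

lemma sqrt_one_sub_sq_div_sq {μ x : ℝ} (hx : 0 < x) :
    √(1 - μ ^ 2 / x ^ 2) = √(x ^ 2 - μ ^ 2) / x := by
  rw [show 1 - μ ^ 2 / x ^ 2 = (x ^ 2 - μ ^ 2) / x ^ 2 by field_simp,
    sqrt_div' _ (sq_nonneg x), sqrt_sq hx.le]

lemma hasDerivAt_radialValue {μ x : ℝ} (hμ : 0 < μ) (hx : μ < x) :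
    HasDerivAt (radialValue μ) (√(x ^ 2 - μ ^ 2) / (μ * x)) x := by
  have hx0 : 0 < x := hμ.trans hx
  have hpos : 0 < x ^ 2 - μ ^ 2 := by nlinarith
  have hS2 : √(x ^ 2 - μ ^ 2) ^ 2 = x ^ 2 - μ ^ 2 := sq_sqrt hpos.le
  have hquot : μ / x < 1 := (div_lt_one hx0).mpr hx
  have hne : x ^ 2 / μ ^ 2 - 1 ≠ 0 := by
    have : 1 < x ^ 2 / μ ^ 2 := (one_lt_div (by positivity)).mpr (by nlinarith)
    exact (sub_pos.mpr this).ne'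
  have hsqrt := (((hasDerivAt_pow 2 x).div_const (μ ^ 2)).sub_const 1).sqrt hne
  have harccos : HasDerivAt (fun x => arccos (μ / x))
      (-(1 / √(1 - (μ / x) ^ 2)) * ((0 * x - μ * 1) / x ^ 2)) x :=
    (hasDerivAt_arccos (by linarith [div_pos hμ hx0]) hquot.ne).comp x
      ((hasDerivAt_const x μ).div (hasDerivAt_id x) hx0.ne')
  refine (hsqrt.sub harccos).congr_deriv ?_
  rw [div_pow, sqrt_sq_div_sq_sub_one hμ, sqrt_one_sub_sq_div_sq hx0]
  field_simp
  norm_num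
  linear_combination (-2) * hS2

lemma sqrt_sq_sub_sq_div_mul_speed {μ x : ℝ} (hμ : 0 < μ) (hx : μ < x) :
    √(x ^ 2 - μ ^ 2) / (μ * x) * (μ * √(1 - μ ^ 2 / x ^ 2)) = 1 - μ ^ 2 / x ^ 2 := by
  have hx0 : 0 < x := hμ.trans hx
  have hS2 : √(x ^ 2 - μ ^ 2) ^ 2 = x ^ 2 - μ ^ 2 := sq_sqrt (by nlinarith)
  rw [sqrt_one_sub_sq_div_sq hx0]
  field_simp
  linear_combination hS2

lemma Convex.eq_of_forall_hasDerivAt_zero {s : Set ℝ} {f : ℝ → ℝ} (hs : Convex ℝ s)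
    (hf : ∀ t ∈ s, HasDerivAt f 0 t) {x y : ℝ} (hx : x ∈ s) (hy : y ∈ s) : f x = f y := by
  have h := hs.norm_image_sub_le_of_norm_hasDerivWithin_le (f' := fun _ => 0) (C := 0)
    (fun t ht => (hf t ht).hasDerivWithinAt) (fun _ _ => norm_zero.le) hy hx
  rw [zero_mul, norm_le_zero_iff, sub_eq_zero] at h
  exact h

/-- Along the classical equilibrium flow
(`r' = μ√(1 − μ²/r²)`, `θ' = μ²/r² − 1`, with `μ < r ≤ 1`) on an interval `I`,
the classical Value function
`V(r,θ) = θ − √(1/μ² − 1) + arccos μ + √(r²/μ² − 1) − arccos(μ/r)` is constant. -/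
theorem stmt_2 (μ : ℝ) (hμ : μ ∈ Set.Ioo (0 : ℝ) 1)
    (I : Set ℝ) (hI : I.OrdConnected)
    (r θ : ℝ → ℝ)
    (hr : ∀ t ∈ I, HasDerivAt r (μ * Real.sqrt (1 - μ ^ 2 / (r t) ^ 2)) t)
    (hθ : ∀ t ∈ I, HasDerivAt θ (μ ^ 2 / (r t) ^ 2 - 1) t)
    (hrange : ∀ t ∈ I, μ < r t ∧ r t ≤ 1)
    (V : ℝ → ℝ → ℝ)
    (hV : ∀ x y : ℝ, V x y =
      y - Real.sqrt (1 / μ ^ 2 - 1) + Real.arccos μ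
        + Real.sqrt (x ^ 2 / μ ^ 2 - 1) - Real.arccos (μ / x)) :
    ∀ t ∈ I, ∀ t' ∈ I, V (r t) (θ t) = V (r t') (θ t') := by
  have hflow : ∀ t ∈ I, HasDerivAt (fun t => θ t + radialValue μ (r t)) 0 t := by
    intro t ht
    have hrt := (hrange t ht).1
    refine ((hθ t ht).add ((hasDerivAt_radialValue hμ.1 hrt).comp t (hr t ht))).congr_deriv ?_
    rw [sqrt_sq_sub_sq_div_mul_speed hμ.1 hrt]
    ring
  intro t ht t' ht'
  have h := hI.convex.eq_of_forall_hasDerivAt_zero hflow ht ht'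
  simp only [radialValue] at h
  rw [hV, hV]
  linarith
end

section
/- Define g : (0,1) → ℝ by g(μ) = π − √(1/μ² − 1) + arccos μ. Then g is differentiable with g'(μ) = √(1 − μ²)/μ² > 0, so g is strictly increasing on (0,1), and there exists a unique μ_crit ∈ (0,1) with g(μ_crit) = 0; moreover 0.217 < μ_crit < 0.218, g(μ) < 0 for μ < μ_crit, and g(μ) > 0 for μ > μ_crit. -/
/-!
On `(0, 1)` we have `√(1/μ² − 1) = √(1 − μ²)/μ`, and differentiating gives
`g'(μ) = √(1 − μ²)/μ² > 0`, so `g` is strictly increasing there and has at most one zero.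
Numerically `g(0.217) < 0 < g(0.218)`, using `π ≈ 3.141593`, the elementary bounds
`x < arcsin x` and `arcsin 0.218 ≤ 0.2215` (from `sin x > x − x³/6`), and
`arccos = π/2 − arcsin`; the intermediate value theorem then places the zero in
`(0.217, 0.218)`, and strict monotonicity gives the sign of `g` on either side of it.
-/

open Real Set

/-- The paper's `θ_T`, for a swimmer of speed `μ` starting from the antipodal point. -/
noncomputable def terminalSeparation (μ : ℝ) : ℝ := π - √(1 / μ ^ 2 - 1) + arccos μ

lemma sqrt_one_div_sq_sub_one {μ : ℝ} (hμ : 0 < μ) : √(1 / μ ^ 2 - 1) = √(1 - μ ^ 2) / μ := by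
  have h : 1 / μ ^ 2 - 1 = (1 - μ ^ 2) / μ ^ 2 := by field_simp
  rw [h, sqrt_div' _ (sq_nonneg μ), sqrt_sq hμ.le]

lemma hasDerivAt_terminalSeparation {μ : ℝ} (hμ : μ ∈ Ioo (0 : ℝ) 1) :
    HasDerivAt terminalSeparation (√(1 - μ ^ 2) / μ ^ 2) μ := by
  obtain ⟨h0, h1⟩ := hμ
  have hμ2 : 0 < μ ^ 2 := by positivity
  have hs : 0 < √(1 - μ ^ 2) := sqrt_pos.mpr (by nlinarith)
  have hu : 0 < 1 / μ ^ 2 - 1 := by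
    rw [sub_pos, lt_div_iff₀ hμ2]
    nlinarith
  have hinner : HasDerivAt (fun x : ℝ => 1 / x ^ 2 - 1) (-(2 * μ) / (μ ^ 2) ^ 2) μ := by
    simpa [one_div] using ((hasDerivAt_pow 2 μ).inv hμ2.ne').sub_const 1
  have h := ((hasDerivAt_const μ π).sub ((hasDerivAt_sqrt hu.ne').comp μ hinner)).add
    (hasDerivAt_arccos (by linarith) h1.ne)
  refine h.congr_deriv ?_
  rw [sqrt_one_div_sq_sub_one h0]
  field_simp
  linear_combination -sq_sqrt (by nlinarith : 0 ≤ 1 - μ ^ 2)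

lemma terminalSeparation_deriv_pos {μ : ℝ} (hμ : μ ∈ Ioo (0 : ℝ) 1) :
    0 < √(1 - μ ^ 2) / μ ^ 2 := by
  have : 0 < √(1 - μ ^ 2) := sqrt_pos.mpr (by nlinarith [hμ.1, hμ.2])
  have : 0 < μ ^ 2 := pow_pos hμ.1 2
  positivity

lemma strictMonoOn_terminalSeparation : StrictMonoOn terminalSeparation (Ioo 0 1) := by
  refine strictMonoOn_of_deriv_pos (convex_Ioo 0 1)
    (HasDerivAt.continuousOn fun _ hμ => hasDerivAt_terminalSeparation hμ) fun μ hμ => ?_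
  rw [interior_Ioo] at hμ
  rw [(hasDerivAt_terminalSeparation hμ).deriv]
  exact terminalSeparation_deriv_pos hμ

lemma lt_arcsin_self {x : ℝ} (hx₀ : 0 < x) (hx₁ : x ≤ 1) : x < arcsin x := by
  have h := sin_lt (arcsin_pos.mpr hx₀)
  rwa [sin_arcsin (by linarith) hx₁] at h

lemma arcsin_0218_le : arcsin 0.218 ≤ (0.2215 : ℝ) := by
  have hπ := pi_gt_d6
  rw [arcsin_le_iff_le_sin (by norm_num) ⟨by linarith, by linarith⟩]
  have := sin_gt_sub_cube (by norm_num : (0 : ℝ) < 0.2215)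
  norm_num at this
  linarith

lemma terminalSeparation_0217_neg : terminalSeparation 0.217 < 0 := by
  have hsqrt : (4.49539 : ℝ) < √(1 / 0.217 ^ 2 - 1) := by
    rw [lt_sqrt (by norm_num)]; norm_num
  have := lt_arcsin_self (by norm_num : (0 : ℝ) < 0.217) (by norm_num)
  have := pi_lt_d6
  rw [terminalSeparation, arccos_eq_pi_div_two_sub_arcsin]
  linarith

lemma terminalSeparation_0218_pos : 0 < terminalSeparation 0.218 := by
  have hsqrt : √(1 / 0.218 ^ 2 - 1) < (4.4908 : ℝ) := by
    rw [sqrt_lt' (by norm_num)]; norm_num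
  have := arcsin_0218_le
  have := pi_gt_d6
  rw [terminalSeparation, arccos_eq_pi_div_two_sub_arcsin]
  linarith

lemma exists_terminalSeparation_eq_zero :
    ∃ μc ∈ Ioo (0.217 : ℝ) 0.218, terminalSeparation μc = 0 := by
  have hcont : ContinuousOn terminalSeparation (Icc 0.217 0.218) :=
    HasDerivAt.continuousOn fun _ hμ =>
      hasDerivAt_terminalSeparation ⟨by linarith [hμ.1], by linarith [hμ.2]⟩
  exact intermediate_value_Ioo (by norm_num) hcont
    ⟨terminalSeparation_0217_neg, terminalSeparation_0218_pos⟩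

/-- `g(μ) = π − √(1/μ² − 1) + arccos μ` is differentiable on `(0,1)`
with `g'(μ) = √(1 − μ²)/μ² > 0`, hence strictly increasing on `(0,1)`; there is a unique
`μ_crit ∈ (0,1)` with `g(μ_crit) = 0`, it satisfies `0.217 < μ_crit < 0.218`, and
`g(μ) < 0` for `μ < μ_crit`, `g(μ) > 0` for `μ > μ_crit` (within `(0,1)`). -/
theorem stmt_4 (g : ℝ → ℝ)
    (hg : ∀ μ : ℝ, g μ = Real.pi - Real.sqrt (1 / μ ^ 2 - 1) + Real.arccos μ) :
    (∀ μ ∈ Set.Ioo (0 : ℝ) 1,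
        HasDerivAt g (Real.sqrt (1 - μ ^ 2) / μ ^ 2) μ ∧
        0 < Real.sqrt (1 - μ ^ 2) / μ ^ 2) ∧
    StrictMonoOn g (Set.Ioo (0 : ℝ) 1) ∧
    (∃! μc : ℝ, μc ∈ Set.Ioo (0 : ℝ) 1 ∧ g μc = 0) ∧
    (∀ μc : ℝ, μc ∈ Set.Ioo (0 : ℝ) 1 → g μc = 0 →
        0.217 < μc ∧ μc < 0.218 ∧
        ∀ μ ∈ Set.Ioo (0 : ℝ) 1, (μ < μc → g μ < 0) ∧ (μc < μ → 0 < g μ)) := by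
  obtain rfl : g = terminalSeparation := funext hg
  have hmono := strictMonoOn_terminalSeparation
  have hlo : (0.217 : ℝ) ∈ Ioo 0 1 := by norm_num
  have hhi : (0.218 : ℝ) ∈ Ioo 0 1 := by norm_num
  obtain ⟨μ₀, hμ₀, hzero⟩ := exists_terminalSeparation_eq_zero
  have hμ₀' : μ₀ ∈ Ioo (0 : ℝ) 1 := ⟨by linarith [hμ₀.1], by linarith [hμ₀.2]⟩
  refine ⟨fun μ hμ => ⟨hasDerivAt_terminalSeparation hμ, terminalSeparation_deriv_pos hμ⟩,
    hmono, ⟨μ₀, ⟨hμ₀', hzero⟩, fun μ ⟨hμ, hμ0⟩ => hmono.injOn hμ hμ₀' (hμ0.trans hzero.symm)⟩,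
    fun μc hμc hμc0 => ⟨?_, ?_, fun μ hμ => ⟨fun h => ?_, fun h => ?_⟩⟩⟩
  · exact (hmono.lt_iff_lt hlo hμc).mp (hμc0 ▸ terminalSeparation_0217_neg)
  · exact (hmono.lt_iff_lt hμc hhi).mp (hμc0 ▸ terminalSeparation_0218_pos)
  · exact hμc0 ▸ hmono hμ hμc h
  · exact hμc0 ▸ hmono hμc hμ h
end

section
/- Let μ ∈ (0,1) and s ∈ (0, μ). Define r : [0, ∞) → ℝ by r(τ) = √(s² − 2τ·s·√(μ² − s²) + μ²τ²) and θ : [0, ∞) → ℝ by θ(τ) = π + τ − arctan(μ²τ/s² − √(μ²/s² − 1)) − arctan(√(μ²/s² − 1)). Then r(τ) > 0 for all τ ≥ 0, θ(0) = π, and θ is differentiable with θ'(τ) = 1 − s²/r(τ)² for all τ ≥ 0. -/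
/-!
Put `a = √(μ²/s² - 1)`, so that `μ² = s²(1 + a²)` and `√(μ² - s²) = s a`. The radicand of `r`
then factors as `s²((1 - aτ)² + τ²)`, a positive multiple of a sum of squares that never both
vanish, and `1 + ((1 + a²)τ - a)² = (1 + a²)((1 - aτ)² + τ²)`, which turns the derivative of
the arctangent term into `s² / r(τ)²`. At `τ = 0` the two arctangents cancel by oddness.
-/

open Real

lemma sq_one_sub_mul_add_sq_pos (a τ : ℝ) : 0 < (1 - a * τ) ^ 2 + τ ^ 2 := by
  rcases eq_or_ne τ 0 with rfl | hτ
  · norm_num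
  · positivity

lemma hasDerivAt_sub_arctan_one_add_sq_mul_sub (a τ : ℝ) :
    HasDerivAt (fun x => x - arctan ((1 + a ^ 2) * x - a))
      (1 - 1 / ((1 - a * τ) ^ 2 + τ ^ 2)) τ := by
  have hlin : HasDerivAt (fun x => (1 + a ^ 2) * x - a) (1 + a ^ 2) τ := by
    simpa using ((hasDerivAt_id τ).const_mul (1 + a ^ 2)).sub_const a
  refine ((hasDerivAt_id τ).sub ((hasDerivAt_arctan _).comp τ hlin)).congr_deriv ?_
  have hden : 1 + ((1 + a ^ 2) * τ - a) ^ 2 = (1 + a ^ 2) * ((1 - a * τ) ^ 2 + τ ^ 2) := by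
    ring
  have hρ := sq_one_sub_mul_add_sq_pos a τ
  rw [hden]
  field_simp

lemma sqrt_sq_sub_sq_eq_mul_sqrt {s : ℝ} (hs : 0 < s) (μ : ℝ) :
    √(μ ^ 2 - s ^ 2) = s * √(μ ^ 2 / s ^ 2 - 1) := by
  rw [show μ ^ 2 - s ^ 2 = s ^ 2 * (μ ^ 2 / s ^ 2 - 1) by field_simp,
    sqrt_mul (sq_nonneg s), sqrt_sq hs.le]

lemma sq_eq_sq_mul_one_add_sq_sqrt {s μ : ℝ} (hs : s ≠ 0) (hsμ : s ^ 2 ≤ μ ^ 2) :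
    μ ^ 2 = s ^ 2 * (1 + √(μ ^ 2 / s ^ 2 - 1) ^ 2) := by
  have hnonneg : 0 ≤ μ ^ 2 / s ^ 2 - 1 := by
    rw [sub_nonneg, one_le_div (by positivity)]
    exact hsμ
  rw [sq_sqrt hnonneg]
  field_simp
  ring

theorem stmt_10_general (μ s : ℝ) (hs : s ∈ Set.Ioo 0 μ)
    (r θ : ℝ → ℝ)
    (hr : ∀ τ : ℝ, r τ =
      Real.sqrt (s ^ 2 - 2 * τ * s * Real.sqrt (μ ^ 2 - s ^ 2) + μ ^ 2 * τ ^ 2))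
    (hθ : ∀ τ : ℝ, θ τ =
      Real.pi + τ - Real.arctan (μ ^ 2 * τ / s ^ 2 - Real.sqrt (μ ^ 2 / s ^ 2 - 1))
        - Real.arctan (Real.sqrt (μ ^ 2 / s ^ 2 - 1))) :
    (∀ τ : ℝ, 0 ≤ τ → 0 < r τ) ∧
    θ 0 = Real.pi ∧
    (∀ τ : ℝ, 0 ≤ τ → HasDerivAt θ (1 - s ^ 2 / (r τ) ^ 2) τ) := by
  obtain ⟨hs0, hsμ⟩ := hs
  set a := √(μ ^ 2 / s ^ 2 - 1)
  have hμ : μ ^ 2 = s ^ 2 * (1 + a ^ 2) :=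
    sq_eq_sq_mul_one_add_sq_sqrt hs0.ne' (pow_le_pow_left₀ hs0.le hsμ.le 2)
  have hr' (τ : ℝ) : r τ = s * √((1 - a * τ) ^ 2 + τ ^ 2) := by
    have hrad : s ^ 2 - 2 * τ * s * (s * a) + μ ^ 2 * τ ^ 2
        = s ^ 2 * ((1 - a * τ) ^ 2 + τ ^ 2) := by
      rw [hμ]; ring
    rw [hr, sqrt_sq_sub_sq_eq_mul_sqrt hs0, hrad, sqrt_mul (sq_nonneg s), sqrt_sq hs0.le]
  have hθ' : θ = fun τ => π + (τ - arctan ((1 + a ^ 2) * τ - a)) - arctan a := by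
    funext τ
    rw [hθ, hμ]
    field_simp
    ring
  refine ⟨fun τ _ => ?_, ?_, fun τ _ => ?_⟩
  · rw [hr']
    exact mul_pos hs0 (sqrt_pos.2 (sq_one_sub_mul_add_sq_pos a τ))
  · simp [hθ', arctan_neg]
  · have hρ := sq_one_sub_mul_add_sq_pos a τ
    rw [hθ']
    refine (((hasDerivAt_sub_arctan_one_add_sq_mul_sub a τ).const_add π).sub_const
      (arctan a)).congr_deriv ?_
    rw [hr', mul_pow, sq_sqrt hρ.le]
    field_simp

/-- For `μ ∈ (0,1)`, `s ∈ (0,μ)`, with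
`r(τ) = √(s² − 2τs√(μ² − s²) + μ²τ²)` and
`θ(τ) = π + τ − arctan(μ²τ/s² − √(μ²/s² − 1)) − arctan(√(μ²/s² − 1))`:
`r(τ) > 0` for all `τ ≥ 0`, `θ(0) = π`, and `θ'(τ) = 1 − s²/r(τ)²` for all `τ ≥ 0`. -/
theorem stmt_10 (μ s : ℝ) (hμ : μ ∈ Set.Ioo (0 : ℝ) 1) (hs : s ∈ Set.Ioo 0 μ)
    (r θ : ℝ → ℝ)
    (hr : ∀ τ : ℝ, r τ =
      Real.sqrt (s ^ 2 - 2 * τ * s * Real.sqrt (μ ^ 2 - s ^ 2) + μ ^ 2 * τ ^ 2))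
    (hθ : ∀ τ : ℝ, θ τ =
      Real.pi + τ - Real.arctan (μ ^ 2 * τ / s ^ 2 - Real.sqrt (μ ^ 2 / s ^ 2 - 1))
        - Real.arctan (Real.sqrt (μ ^ 2 / s ^ 2 - 1))) :
    (∀ τ : ℝ, 0 ≤ τ → 0 < r τ) ∧
    θ 0 = Real.pi ∧
    (∀ τ : ℝ, 0 ≤ τ → HasDerivAt θ (1 - s ^ 2 / (r τ) ^ 2) τ) :=
  stmt_10_general μ s hs r θ hr hθ
end

section
/- Let μ ∈ (0,1) and s ∈ (0, μ), and define r : [0, ∞) → ℝ by r(τ) = √(s² − 2τ·s·√(μ² − s²) + μ²τ²). Then for all τ ≥ 0: r(τ)² ≥ s⁴/μ² (in particular r(τ) > 0), r is differentiable with r(τ)·r'(τ) = μ²τ − s·√(μ² − s²), and hence (r(τ)·r'(τ))² = μ²·(r(τ)² − s⁴/μ²), i.e., |r'(τ)| = (μ/r(τ))·√(r(τ)² − s⁴/μ²). -/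
/-!
Writing `c = √(μ² − s²)`, the radicand `Q(τ) = s² − 2τsc + μ²τ²` satisfies
`μ² Q(τ) = (μ²τ − sc)² + s⁴` because `c² + s² = μ²`. This gives `Q ≥ s⁴/μ² > 0`, so `r = √Q` is
differentiable with `r r' = Q'/2 = μ²τ − sc`, and squaring returns `μ²(r² − s⁴/μ²)`.
-/

open Real

/-- The radicand `r(τ)²` of the Focal Line tributary entering at radius `s`. -/
noncomputable def focalRadiusSq (μ s τ : ℝ) : ℝ :=
  s ^ 2 - 2 * τ * s * √(μ ^ 2 - s ^ 2) + μ ^ 2 * τ ^ 2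

lemma focalRadiusSq_sub_eq_sq {μ s : ℝ} (hμ : μ ≠ 0) (hsμ : s ^ 2 ≤ μ ^ 2) (τ : ℝ) :
    focalRadiusSq μ s τ - s ^ 4 / μ ^ 2 = ((μ ^ 2 * τ - s * √(μ ^ 2 - s ^ 2)) / μ) ^ 2 := by
  have hc : √(μ ^ 2 - s ^ 2) ^ 2 = μ ^ 2 - s ^ 2 := sq_sqrt (sub_nonneg.2 hsμ)
  unfold focalRadiusSq
  field_simp
  linear_combination (-s ^ 2) * hc

lemma hasDerivAt_focalRadiusSq (μ s τ : ℝ) :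
    HasDerivAt (focalRadiusSq μ s) (2 * (μ ^ 2 * τ - s * √(μ ^ 2 - s ^ 2))) τ := by
  have h := (((hasDerivAt_id τ).const_mul (2 * s * √(μ ^ 2 - s ^ 2))).const_sub (s ^ 2)).add
    ((hasDerivAt_pow 2 τ).const_mul (μ ^ 2))
  refine (h.congr_deriv (by norm_num; ring)).congr_of_eventuallyEq (.of_forall fun x ↦ ?_)
  simp only [focalRadiusSq, id, Pi.add_apply]
  ring

lemma sqrt_mul_deriv_sqrt {f : ℝ → ℝ} {f' x : ℝ} (hf : HasDerivAt f f' x)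
    (hx : 0 < f x) : √(f x) * deriv (fun y ↦ √(f y)) x = f' / 2 := by
  rw [(hf.sqrt hx.ne').deriv]
  field_simp [(sqrt_pos.2 hx).ne']

lemma abs_eq_div_mul_sqrt_of_mul_sq_eq {a b μ d : ℝ} (ha : 0 < a) (hμ : 0 ≤ μ)
    (h : (a * b) ^ 2 = μ ^ 2 * d) : |b| = μ / a * √d := by
  have hab : a * |b| = μ * √d := by
    rw [← abs_of_pos ha, ← abs_mul, ← sqrt_sq_eq_abs, h, sqrt_mul (sq_nonneg μ), sqrt_sq hμ]
  rw [div_mul_eq_mul_div, eq_div_iff ha.ne', mul_comm, hab]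

/-- For `μ ∈ (0,1)`, `s ∈ (0,μ)` and
`r(τ) = √(s² − 2τs√(μ² − s²) + μ²τ²)`: for all `τ ≥ 0`, `r(τ)² ≥ s⁴/μ²`
(in particular `r(τ) > 0`), `r` is differentiable with
`r(τ)·r'(τ) = μ²τ − s√(μ² − s²)`, hence `(r(τ)·r'(τ))² = μ²(r(τ)² − s⁴/μ²)`, i.e.
`|r'(τ)| = (μ/r(τ))·√(r(τ)² − s⁴/μ²)`. -/
theorem stmt_11 (μ s : ℝ) (hμ : μ ∈ Set.Ioo (0 : ℝ) 1) (hs : s ∈ Set.Ioo 0 μ)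
    (r : ℝ → ℝ)
    (hr : ∀ τ : ℝ, r τ =
      Real.sqrt (s ^ 2 - 2 * τ * s * Real.sqrt (μ ^ 2 - s ^ 2) + μ ^ 2 * τ ^ 2)) :
    ∀ τ : ℝ, 0 ≤ τ →
      s ^ 4 / μ ^ 2 ≤ (r τ) ^ 2 ∧ 0 < r τ ∧
      DifferentiableAt ℝ r τ ∧
      r τ * deriv r τ = μ ^ 2 * τ - s * Real.sqrt (μ ^ 2 - s ^ 2) ∧
      (r τ * deriv r τ) ^ 2 = μ ^ 2 * ((r τ) ^ 2 - s ^ 4 / μ ^ 2) ∧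
      |deriv r τ| = μ / r τ * Real.sqrt ((r τ) ^ 2 - s ^ 4 / μ ^ 2) := by
  intro τ _
  obtain ⟨hμ0, -⟩ := hμ
  obtain ⟨hs0, hsμ⟩ := hs
  have hr_eq : r = fun x ↦ √(focalRadiusSq μ s x) := funext hr
  have hsq_sub := focalRadiusSq_sub_eq_sq hμ0.ne' (pow_le_pow_left₀ hs0.le hsμ.le 2) τ
  have hQ_ge : s ^ 4 / μ ^ 2 ≤ focalRadiusSq μ s τ := sub_nonneg.1 (hsq_sub ▸ sq_nonneg _)
  have hQ_pos : 0 < focalRadiusSq μ s τ := (by positivity : 0 < s ^ 4 / μ ^ 2).trans_le hQ_ge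
  have hQ' := hasDerivAt_focalRadiusSq μ s τ
  have hr_sq : r τ ^ 2 = focalRadiusSq μ s τ := by rw [hr_eq, sq_sqrt hQ_pos.le]
  have hprod : r τ * deriv r τ = μ ^ 2 * τ - s * √(μ ^ 2 - s ^ 2) := by
    rw [hr_eq, sqrt_mul_deriv_sqrt hQ' hQ_pos]
    ring
  have hprod_sq : (r τ * deriv r τ) ^ 2 = μ ^ 2 * (r τ ^ 2 - s ^ 4 / μ ^ 2) := by
    rw [hprod, hr_sq, hsq_sub]
    field_simp
  have hr_pos : 0 < r τ := by rw [hr_eq]; exact sqrt_pos.2 hQ_pos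
  refine ⟨hr_sq ▸ hQ_ge, hr_pos, ?_, hprod, hprod_sq,
    abs_eq_div_mul_sqrt_of_mul_sq_eq hr_pos hμ0.le hprod_sq⟩
  rw [hr_eq]
  exact (hQ'.sqrt hQ_pos.ne').differentiableAt
end

section
/- Let μ ∈ (0,1) and fix τ > 0. Define, for s ∈ (0, μ), r(τ; s) = √(s² − 2τ·s·√(μ² − s²) + μ²τ²) and θ(τ; s) = π + τ − arctan(μ²τ/s² − √(μ²/s² − 1)) − arctan(√(μ²/s² − 1)). Then lim_{s → 0⁺} r(τ; s) = μτ and lim_{s → 0⁺} θ(τ; s) = τ. In particular, as s → 0⁺ the Focal Line tributary converges pointwise to the line θ = r/μ. -/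
open Filter Real Set

lemma sqrt_tendsto_atTop' : Tendsto Real.sqrt atTop atTop := by
  apply tendsto_atTop_atTop.mpr
  intro b
  refine ⟨b ^ 2, fun a ha => ?_⟩
  calc b ≤ |b| := le_abs_self b
    _ = Real.sqrt (b ^ 2) := (Real.sqrt_sq_eq_abs b).symm
    _ ≤ Real.sqrt a := Real.sqrt_le_sqrt ha

/-- For `μ ∈ (0,1)` and fixed `τ > 0`, with
`r(τ;s) = √(s² − 2τs√(μ² − s²) + μ²τ²)` and
`θ(τ;s) = π + τ − arctan(μ²τ/s² − √(μ²/s² − 1)) − arctan(√(μ²/s² − 1))` for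
`s ∈ (0,μ)`: `r(τ;s) → μτ` and `θ(τ;s) → τ` as `s → 0⁺`; i.e. the Focal Line
tributary converges pointwise to the line `θ = r/μ`. -/
theorem stmt_16 (μ τ : ℝ) (hμ : μ ∈ Set.Ioo (0 : ℝ) 1) (hτ : 0 < τ) :
    Filter.Tendsto
      (fun s : ℝ =>
        Real.sqrt (s ^ 2 - 2 * τ * s * Real.sqrt (μ ^ 2 - s ^ 2) + μ ^ 2 * τ ^ 2))
      (nhdsWithin 0 (Set.Ioo 0 μ)) (nhds (μ * τ)) ∧
    Filter.Tendsto
      (fun s : ℝ =>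
        Real.pi + τ - Real.arctan (μ ^ 2 * τ / s ^ 2 - Real.sqrt (μ ^ 2 / s ^ 2 - 1))
          - Real.arctan (Real.sqrt (μ ^ 2 / s ^ 2 - 1)))
      (nhdsWithin 0 (Set.Ioo 0 μ)) (nhds τ) := by
  obtain ⟨hμ0, hμ1⟩ := hμ
  constructor
  · -- continuity of r at s = 0
    have hc : ContinuousAt (fun s : ℝ =>
        Real.sqrt (s ^ 2 - 2 * τ * s * Real.sqrt (μ ^ 2 - s ^ 2) + μ ^ 2 * τ ^ 2)) 0 := by
      fun_prop
    have h0 : Real.sqrt ((0:ℝ) ^ 2 - 2 * τ * 0 * Real.sqrt (μ ^ 2 - 0 ^ 2) + μ ^ 2 * τ ^ 2)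
        = μ * τ := by
      rw [show (0:ℝ) ^ 2 - 2 * τ * 0 * Real.sqrt (μ ^ 2 - 0 ^ 2) + μ ^ 2 * τ ^ 2
          = (μ * τ) ^ 2 by ring]
      exact Real.sqrt_sq (by positivity)
    have := hc.tendsto.mono_left (nhdsWithin_le_nhds (s := Set.Ioo 0 μ))
    rwa [h0] at this
  · -- θ limit
    -- s² tends to 0 from the right
    have hsq : Tendsto (fun s : ℝ => s ^ 2) (nhdsWithin 0 (Set.Ioo 0 μ)) (nhdsWithin 0 (Set.Ioi 0)) := by
      apply tendsto_nhdsWithin_of_tendsto_nhds_of_eventually_within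
      · have : Tendsto (fun s : ℝ => s ^ 2) (nhds 0) (nhds ((0:ℝ) ^ 2)) :=
          (continuous_pow 2).tendsto 0
        simpa using this.mono_left (nhdsWithin_le_nhds (s := Set.Ioo 0 μ))
      · filter_upwards [self_mem_nhdsWithin] with s hs
        exact pow_pos hs.1 2
    have hinv : Tendsto (fun s : ℝ => (s ^ 2)⁻¹) (nhdsWithin 0 (Set.Ioo 0 μ)) atTop :=
      tendsto_inv_nhdsGT_zero.comp hsq
    -- μ²/s² − 1 → atTop
    have hA : Tendsto (fun s : ℝ => μ ^ 2 / s ^ 2 - 1) (nhdsWithin 0 (Set.Ioo 0 μ)) atTop := by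
      have h1 : Tendsto (fun s : ℝ => μ ^ 2 * (s ^ 2)⁻¹) (nhdsWithin 0 (Set.Ioo 0 μ)) atTop :=
        hinv.const_mul_atTop (by positivity)
      have := h1.atTop_add (tendsto_const_nhds (x := (-1 : ℝ)))
      refine this.congr fun s => ?_
      rw [div_eq_mul_inv]; ring
    -- √(μ²/s²−1) → atTop, hence its arctan → π/2
    have hB : Tendsto (fun s : ℝ => Real.sqrt (μ ^ 2 / s ^ 2 - 1))
        (nhdsWithin 0 (Set.Ioo 0 μ)) atTop := sqrt_tendsto_atTop'.comp hA
    have harctan2 : Tendsto (fun s : ℝ => Real.arctan (Real.sqrt (μ ^ 2 / s ^ 2 - 1)))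
        (nhdsWithin 0 (Set.Ioo 0 μ)) (nhds (π / 2)) :=
      (Real.tendsto_arctan_atTop.mono_right nhdsWithin_le_nhds).comp hB
    -- the first arctan argument → atTop
    have hG : Tendsto (fun s : ℝ => μ ^ 2 * τ / s ^ 2 - Real.sqrt (μ ^ 2 / s ^ 2 - 1))
        (nhdsWithin 0 (Set.Ioo 0 μ)) atTop := by
      have hlow : Tendsto (fun s : ℝ => μ ^ 2 * τ / 2 * (s ^ 2)⁻¹)
          (nhdsWithin 0 (Set.Ioo 0 μ)) atTop :=
        hinv.const_mul_atTop (by positivity)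
      apply tendsto_atTop_mono' _ _ hlow
      have hsmall : ∀ᶠ s in nhdsWithin (0:ℝ) (Set.Ioo 0 μ), s < μ * τ / 2 :=
        (eventually_lt_nhds (show (0:ℝ) < μ * τ / 2 by positivity)).filter_mono
          nhdsWithin_le_nhds
      filter_upwards [self_mem_nhdsWithin, hsmall] with s hs hs2
      obtain ⟨hs0, hsμ⟩ := hs
      have hsqrt_le : Real.sqrt (μ ^ 2 / s ^ 2 - 1) ≤ μ / s := by
        rw [show μ / s = Real.sqrt ((μ / s) ^ 2) from
          (Real.sqrt_sq (by positivity)).symm]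
        apply Real.sqrt_le_sqrt
        rw [div_pow]; nlinarith [sq_nonneg s]
      have hμs : μ / s ≤ μ ^ 2 * τ / 2 * (s ^ 2)⁻¹ := by
        rw [div_le_iff₀ hs0] at *
        have hs2' : 2 * s ≤ μ * τ := by linarith
        rw [show μ ^ 2 * τ / 2 * (s ^ 2)⁻¹ * s = μ * (μ * τ) / (2 * s) by
          field_simp]
        rw [le_div_iff₀ (by positivity)]
        nlinarith
      have : μ ^ 2 * τ / s ^ 2 = 2 * (μ ^ 2 * τ / 2 * (s ^ 2)⁻¹) := by
        field_simp
      rw [this]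
      linarith
    have harctan1 : Tendsto (fun s : ℝ =>
        Real.arctan (μ ^ 2 * τ / s ^ 2 - Real.sqrt (μ ^ 2 / s ^ 2 - 1)))
        (nhdsWithin 0 (Set.Ioo 0 μ)) (nhds (π / 2)) :=
      (Real.tendsto_arctan_atTop.mono_right nhdsWithin_le_nhds).comp hG
    have : Tendsto (fun s : ℝ =>
        Real.pi + τ - Real.arctan (μ ^ 2 * τ / s ^ 2 - Real.sqrt (μ ^ 2 / s ^ 2 - 1))
          - Real.arctan (Real.sqrt (μ ^ 2 / s ^ 2 - 1)))
        (nhdsWithin 0 (Set.Ioo 0 μ)) (nhds (π + τ - π / 2 - π / 2)) :=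
      (tendsto_const_nhds.sub harctan1).sub harctan2
    convert this using 2
    ring
end
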